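/- Let R be a commutative Noetherian local ring. A full subcategory X of finitely generated R-modules (closed under isomorphism) containing R and closed under direct summands and extensions is closed under kernels of epimorphisms if and only if it is closed under taking syzygies. -/

import Mathlib

/-!
A syzygy of `M` is the kernel of an epimorphism `Rⁿ → M`, and `Rⁿ` is obtained from `R` by
extensions, so closure under kernels of epimorphisms gives closure under syzygies.
Conversely, let `0 → A → B → C → 0` be exact with `B, C ∈ S`. Take a minimal free cover
`π : Rⁿ → C` (lifts of a basis of `k ⊗ C`, by Nakayama) and lift it to `t : Rⁿ → B`. Then
`(a, x) ↦ f a + t x` is an epimorphism `A × Rⁿ → B` whose kernel is isomorphic to `ker π`, a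
syzygy of `C`; hence `A × Rⁿ ∈ S` by closure under extensions, and `A ∈ S` as a direct summand.
-/

open CategoryTheory IsLocalRing

noncomputable section

variable (R : Type) [CommRing R] [IsLocalRing R]

/-- `K` is (isomorphic to) the first syzygy of `M`, i.e. the kernel of a
minimal free cover of `M`. -/
def IsSyzygyOf (K M : ModuleCat.{0} R) : Prop :=
  ∃ (n : ℕ) (f : (Fin n → R) →ₗ[R] M),
    Function.Surjective f ∧
    LinearMap.ker f ≤ (maximalIdeal R) • (⊤ : Submodule R (Fin n → R)) ∧
    Nonempty (K ≃ₗ[R] LinearMap.ker f)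

theorem Submodule.mem_ideal_smul_top_pi {R ι : Type*} [CommRing R] [Fintype ι] {I : Ideal R}
    {x : ι → R} (hx : ∀ i, x i ∈ I) : x ∈ I • (⊤ : Submodule R (ι → R)) := by
  classical
  rw [pi_eq_sum_univ x]
  exact Submodule.sum_mem _ fun i _ => Submodule.smul_mem_smul (hx i) trivial

open scoped TensorProduct in
theorem IsLocalRing.exists_surjective_ker_le_maximalIdeal_smul (R M : Type*) [CommRing R]
    [IsLocalRing R] [AddCommGroup M] [Module R M] [Module.Finite R M] :
    ∃ (n : ℕ) (f : (Fin n → R) →ₗ[R] M), Function.Surjective f ∧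
      LinearMap.ker f ≤ maximalIdeal R • (⊤ : Submodule R (Fin n → R)) := by
  let b := Module.finBasis (ResidueField R) (ResidueField R ⊗[R] M)
  choose v hv using fun i =>
    TensorProduct.mk_surjective R M (ResidueField R) Ideal.Quotient.mk_surjective (b i)
  refine ⟨_, Fintype.linearCombination R v, ?_, fun x hx => ?_⟩
  · rw [← LinearMap.range_eq_top, Fintype.range_linearCombination]
    exact span_eq_top_of_tmul_eq_basis v b hv
  · have hb : ∑ i, residue R (x i) • b i = 0 := by
      have := congrArg (TensorProduct.mk R (ResidueField R) M 1) (LinearMap.mem_ker.mp hx)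
      simpa [Fintype.linearCombination_apply, ← hv, TensorProduct.tmul_sum,
        TensorProduct.tmul_smul, ← ResidueField.algebraMap_eq, algebraMap_smul] using this
    exact Submodule.mem_ideal_smul_top_pi fun i => (residue_eq_zero_iff _).mp
      (Fintype.linearIndependent_iff.mp b.linearIndependent _ hb i)

section Exact

variable {R A B C P : Type*} [CommRing R] [AddCommGroup A] [AddCommGroup B] [AddCommGroup C]
  [AddCommGroup P] [Module R A] [Module R B] [Module R C] [Module R P]
  {f : A →ₗ[R] B} {g : B →ₗ[R] C}

theorem Function.Exact.surjective_coprod (h : Function.Exact f g) (t : P →ₗ[R] B)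
    (ht : Function.Surjective (g ∘ₗ t)) : Function.Surjective (f.coprod t) := by
  intro b
  obtain ⟨x, hx⟩ := ht (g b)
  obtain ⟨a, ha⟩ := (h (b - t x)).mp (by simp [← hx])
  exact ⟨(a, x), by simp [ha]⟩

def Function.Exact.kerCoprodEquiv (h : Function.Exact f g) (hf : Function.Injective f)
    (t : P →ₗ[R] B) : LinearMap.ker (f.coprod t) ≃ₗ[R] LinearMap.ker (g ∘ₗ t) := by
  refine LinearEquiv.ofBijective
    ((LinearMap.snd R A P ∘ₗ (LinearMap.ker _).subtype).codRestrict _ fun z => ?_) ⟨?_, ?_⟩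
  · have hz : t z.1.2 = -f z.1.1 := eq_neg_of_add_eq_zero_right z.2
    simp [hz, h.apply_apply_eq_zero]
  · refine (injective_iff_map_eq_zero _).mpr fun z hz => ?_
    have h2 : z.1.2 = 0 := congrArg Subtype.val hz
    have h1 : z.1.1 = 0 := hf <| by
      have hker : f z.1.1 + t z.1.2 = 0 := z.2
      rwa [h2, map_zero, add_zero, ← map_zero f] at hker
    exact Subtype.ext (Prod.ext h1 h2)
  · rintro ⟨x, hx⟩
    obtain ⟨a, ha⟩ := (h (t x)).mp hx
    exact ⟨⟨(-a, x), by simp [ha]⟩, rfl⟩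

end Exact

section Closure

variable {R : Type} [CommRing R]

def IsClosedUnderExtensions (S : Set (ModuleCat.{0} R)) : Prop :=
  ∀ (A B C : ModuleCat.{0} R) (f : A →ₗ[R] B) (g : B →ₗ[R] C),
    Function.Injective f → Function.Surjective g →
    LinearMap.range f = LinearMap.ker g → A ∈ S → C ∈ S → B ∈ S

def IsClosedUnderKernelsOfEpis (S : Set (ModuleCat.{0} R)) : Prop :=
  ∀ (A B C : ModuleCat.{0} R) (f : A →ₗ[R] B) (g : B →ₗ[R] C),
    Function.Injective f → Function.Surjective g →
    LinearMap.range f = LinearMap.ker g → B ∈ S → C ∈ S → A ∈ S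

def IsClosedUnderSummands (S : Set (ModuleCat.{0} R)) : Prop :=
  ∀ A B C : ModuleCat.{0} R, A ∈ S → Nonempty (A ≃ₗ[R] (↥B × ↥C)) → B ∈ S

variable {S : Set (ModuleCat.{0} R)}

theorem IsClosedUnderSummands.mem_of_linearEquiv (hsum : IsClosedUnderSummands S)
    {A B : ModuleCat.{0} R} (hA : A ∈ S) (e : A ≃ₗ[R] B) : B ∈ S :=
  hsum A B (ModuleCat.of R PUnit) hA ⟨e.trans LinearEquiv.prodUnique.symm⟩

theorem IsClosedUnderExtensions.prod_mem (hext : IsClosedUnderExtensions S)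
    {M N : Type} [AddCommGroup M] [Module R M] [AddCommGroup N] [Module R N]
    (hM : ModuleCat.of R M ∈ S) (hN : ModuleCat.of R N ∈ S) : ModuleCat.of R (M × N) ∈ S :=
  hext (.of R M) (.of R (M × N)) (.of R N) (LinearMap.inl R M N) (LinearMap.snd R M N)
    LinearMap.inl_injective LinearMap.snd_surjective
    (LinearMap.exact_iff.mp Function.Exact.inl_snd).symm hM hN

theorem IsClosedUnderExtensions.pi_fin_mem (hext : IsClosedUnderExtensions S)
    (hsum : IsClosedUnderSummands S) (hR : ModuleCat.of R R ∈ S) :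
    ∀ n : ℕ, ModuleCat.of R (Fin n → R) ∈ S
  | 0 => hsum (.of R R) _ (.of R R) hR ⟨LinearEquiv.uniqueProd.symm⟩
  | n + 1 => hsum.mem_of_linearEquiv (hext.prod_mem hR (hext.pi_fin_mem hsum hR n))
      (Fin.consLinearEquiv R fun _ => R)

end Closure

variable {R}

def IsClosedUnderSyzygies (S : Set (ModuleCat.{0} R)) : Prop :=
  ∀ M ∈ S, ∀ K : ModuleCat.{0} R, IsSyzygyOf R K M → K ∈ S

variable {S : Set (ModuleCat.{0} R)}

theorem IsClosedUnderKernelsOfEpis.isClosedUnderSyzygies (hker : IsClosedUnderKernelsOfEpis S)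
    (hext : IsClosedUnderExtensions S) (hsum : IsClosedUnderSummands S)
    (hR : ModuleCat.of R R ∈ S) : IsClosedUnderSyzygies S := by
  rintro M hM K ⟨n, f, hf, -, ⟨e⟩⟩
  have hkerf : ModuleCat.of R (LinearMap.ker f) ∈ S :=
    hker _ (.of R (Fin n → R)) M (LinearMap.ker f).subtype f (Submodule.injective_subtype _) hf
      (Submodule.range_subtype _) (hext.pi_fin_mem hsum hR n) hM
  exact hsum.mem_of_linearEquiv hkerf e.symm

theorem IsClosedUnderSyzygies.isClosedUnderKernelsOfEpis (hsyz : IsClosedUnderSyzygies S)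
    (hfin : ∀ A ∈ S, Module.Finite R A) (hext : IsClosedUnderExtensions S)
    (hsum : IsClosedUnderSummands S) : IsClosedUnderKernelsOfEpis S := by
  intro A B C f g hf hg hfg hB hC
  have := hfin C hC
  obtain ⟨n, π, hπ, hπker⟩ := exists_surjective_ker_le_maximalIdeal_smul R C
  obtain ⟨t, rfl⟩ := Module.projective_lifting_property g π hg
  have hexact : Function.Exact f g := LinearMap.exact_iff.mpr hfg.symm
  have hK : ModuleCat.of R (LinearMap.ker (g ∘ₗ t)) ∈ S :=
    hsyz C hC _ ⟨n, _, hπ, hπker, ⟨LinearEquiv.refl R _⟩⟩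
  have hAF : ModuleCat.of R (A × (Fin n → R)) ∈ S :=
    hext _ _ B (LinearMap.ker (f.coprod t)).subtype (f.coprod t) (Submodule.injective_subtype _)
      (hexact.surjective_coprod t hπ) (Submodule.range_subtype _)
      (hsum.mem_of_linearEquiv (B := .of R _) hK (hexact.kerCoprodEquiv hf t).symm) hB
  exact hsum _ A (.of R (Fin n → R)) hAF ⟨LinearEquiv.refl R _⟩

theorem closed_under_ker_epi_iff_closed_under_syzygy
    (S : Set (ModuleCat.{0} R))
    (hfg : ∀ A ∈ S, Module.Finite R ↥A)
    (hR : ModuleCat.of R R ∈ S)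
    (hsummand : ∀ A B C : ModuleCat.{0} R, A ∈ S →
      Nonempty (A ≃ₗ[R] (↥B × ↥C)) → B ∈ S)
    (hext : ∀ (A B C : ModuleCat.{0} R) (f : A →ₗ[R] B) (g : B →ₗ[R] C),
      Function.Injective f → Function.Surjective g →
      LinearMap.range f = LinearMap.ker g → A ∈ S → C ∈ S → B ∈ S) :
    (∀ (A B C : ModuleCat.{0} R) (f : A →ₗ[R] B) (g : B →ₗ[R] C),
      Function.Injective f → Function.Surjective g →
      LinearMap.range f = LinearMap.ker g → B ∈ S → C ∈ S → A ∈ S) ↔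
    (∀ M ∈ S, ∀ K : ModuleCat.{0} R, IsSyzygyOf R K M → K ∈ S) :=
  ⟨fun hker => IsClosedUnderKernelsOfEpis.isClosedUnderSyzygies hker hext hsummand hR,
    fun hsyz => IsClosedUnderSyzygies.isClosedUnderKernelsOfEpis hsyz hfg hext hsummand⟩
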